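/- For every K ≤ 0, N ∈ (1,∞), D > 0 and C > 0 there exists a constant n₃ = n₃(N,K,D,C) > 0 with the following property. Let (X₁,d₁) and (X₂,d₂) be geodesic metric spaces of diameter ≤ D, each equipped with a Borel measure of full support which is finite and nonzero and satisfies the Bishop–Gromov inequality with parameters (K,N). Let 0 < ε ≤ D, let {p₁,…,p_{n₀}} ⊆ X₁ and {q₁,…,q_{n₀}} ⊆ X₂ be minimal ε-nets having the same intersection pattern, i.e. B(p_i,ε) ∩ B(p_j,ε) ≠ ∅ if and only if B(q_i,ε) ∩ B(q_j,ε) ≠ ∅, for all i,j. Then for all i,j, if d₁(p_i,p_j) < C·ε, then d₂(q_i,q_j) < n₃·ε. -/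

import Mathlib

open MeasureTheory Metric

/-- The model volume density `S_K^N` for `K ≤ 0`, `1 < N < ∞`. -/
noncomputable def SKN (K N t : ℝ) : ℝ :=
  if K = 0 then t ^ (N - 1)
  else Real.sinh (Real.sqrt (|K| / (N - 1)) * t) ^ (N - 1)

/-- A Borel measure `ν` of full support satisfies the Bishop–Gromov inequality with
parameters `(K, N)` if for every `x` the function
`r ↦ ν(B(x,r)) / ∫₀^r S_K^N(t) dt` is nonincreasing on `(0, ∞)`. -/
def BishopGromov {X : Type*} [MetricSpace X] [MeasurableSpace X]
    (ν : Measure X) (K N : ℝ) : Prop :=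
  ∀ x : X, AntitoneOn
    (fun r => (ν (ball x r)).toReal / ∫ t in (0:ℝ)..r, SKN K N t) (Set.Ioi 0)

/-- A metric space is geodesic if every pair of points is joined by a geodesic
(an isometric image of a real interval). -/
def IsGeodesicSpace (X : Type*) [MetricSpace X] : Prop :=
  ∀ x y : X, ∃ f : ℝ → X, f 0 = x ∧ f (dist x y) = y ∧
    ∀ s ∈ Set.Icc (0:ℝ) (dist x y), ∀ t ∈ Set.Icc (0:ℝ) (dist x y),
      dist (f s) (f t) = |s - t|

universe u v

/-!
Join `p i` to `p j` by a geodesic. The net balls `B(p k, ε)` meeting it have centres within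
`(C + 1) ε` of `p i` and pairwise disjoint balls `B(p k, ε/2)`, so Bishop–Gromov bounds their
number by `1 / c₀`, where `c₀` depends only on `N, K, D, C`: on `[0, T]` the density `S_K^N` is
pinched between two multiples of `t ^ (N - 1)`. The geodesic is connected, so these balls have a
connected intersection graph, and a path in it from `i` to `j` has fewer than `1 / c₀` edges.
The intersection pattern turns each edge `k – l` into `d₂(q k, q l) < 2ε`, whence
`d₂(q i, q j) < 2ε / c₀`.
-/

open Set Topology

lemma convexOn_sinh_Ici : ConvexOn ℝ (Ici 0) Real.sinh := by
  refine MonotoneOn.convexOn_of_deriv (convex_Ici 0) Real.continuous_sinh.continuousOn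
    Real.differentiable_sinh.differentiableOn ?_
  rw [Real.deriv_sinh, interior_Ici]
  intro x hx y hy hxy
  rw [Real.cosh_le_cosh, abs_of_pos hx, abs_of_pos hy]
  exact hxy

lemma Real.sinh_le_div_mul {x X : ℝ} (hx : 0 ≤ x) (hxX : x ≤ X) (hX : 0 < X) :
    Real.sinh x ≤ Real.sinh X / X * x := by
  have h := convexOn_sinh_Ici.2 (mem_Ici.2 le_rfl) (mem_Ici.2 hX.le)
    (sub_nonneg.2 ((div_le_one hX).2 hxX)) (div_nonneg hx hX.le) (sub_add_cancel 1 (x / X))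
  simp only [smul_eq_mul, mul_zero, Real.sinh_zero, zero_add, div_mul_cancel₀ _ hX.ne'] at h
  linarith [div_mul_comm (Real.sinh X) X x]

lemma continuous_SKN (K : ℝ) {N : ℝ} (hN : 1 < N) : Continuous (SKN K N) := by
  have hN' : 0 ≤ N - 1 := by linarith
  unfold SKN
  split_ifs
  · exact continuous_id.rpow_const fun _ => Or.inr hN'
  · exact (Real.continuous_sinh.comp (continuous_const.mul continuous_id)).rpow_const
      fun _ => Or.inr hN'

lemma exists_SKN_rpow_bounds (K : ℝ) {N T : ℝ} (hN : 1 < N) (hT : 0 < T) :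
    ∃ m M : ℝ, 0 < m ∧ 0 < M ∧ ∀ t ∈ Icc 0 T,
      m * t ^ (N - 1) ≤ SKN K N t ∧ SKN K N t ≤ M * t ^ (N - 1) := by
  by_cases hK : K = 0
  · exact ⟨1, 1, one_pos, one_pos, fun t _ => by simp [SKN, hK]⟩
  set a := Real.sqrt (|K| / (N - 1))
  have ha : 0 < a := Real.sqrt_pos.2 (div_pos (abs_pos.2 hK) (by linarith))
  have hsinh : 0 < Real.sinh (a * T) := Real.sinh_pos_iff.2 (by positivity)
  refine ⟨a ^ (N - 1), (Real.sinh (a * T) / T) ^ (N - 1), by positivity, by positivity,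
    fun t ht => ?_⟩
  have hat : 0 ≤ a * t := mul_nonneg ha.le ht.1
  simp only [SKN, if_neg hK]
  rw [← Real.mul_rpow ha.le ht.1, ← Real.mul_rpow (by positivity) ht.1]
  constructor
  · exact Real.rpow_le_rpow hat (Real.self_le_sinh_iff.2 hat) (by linarith)
  · refine Real.rpow_le_rpow (Real.sinh_nonneg_iff.2 hat) ?_ (by linarith)
    calc Real.sinh (a * t) ≤ Real.sinh (a * T) / (a * T) * (a * t) :=
          Real.sinh_le_div_mul hat (by gcongr; exact ht.2) (by positivity)
      _ = Real.sinh (a * T) / T * t := by field_simp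

lemma integral_mul_rpow_sub_one (A : ℝ) {N : ℝ} (hN : 0 < N) (x : ℝ) :
    ∫ t in (0:ℝ)..x, A * t ^ (N - 1) = A * (x ^ N / N) := by
  rw [intervalIntegral.integral_const_mul, integral_rpow (Or.inl (by linarith)),
    sub_add_cancel, Real.zero_rpow hN.ne', sub_zero]

lemma exists_integral_SKN_bounds (K : ℝ) {N T : ℝ} (hN : 1 < N) (hT : 0 < T) :
    ∃ m M : ℝ, 0 < m ∧ 0 < M ∧ ∀ r ∈ Icc 0 T,
      m * (r ^ N / N) ≤ ∫ t in (0:ℝ)..r, SKN K N t ∧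
      ∫ t in (0:ℝ)..r, SKN K N t ≤ M * (r ^ N / N) := by
  obtain ⟨m, M, hm, hM, hb⟩ := exists_SKN_rpow_bounds K hN hT
  refine ⟨m, M, hm, hM, fun r hr => ?_⟩
  have hS := (continuous_SKN K hN).intervalIntegrable (μ := MeasureTheory.volume) 0 r
  have hpow (A : ℝ) : IntervalIntegrable (fun t => A * t ^ (N - 1)) MeasureTheory.volume 0 r :=
    (intervalIntegral.intervalIntegrable_rpow' (by linarith)).const_mul A
  have hbr : ∀ t ∈ Icc 0 r, _ := fun t ht => hb t ⟨ht.1, ht.2.trans hr.2⟩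
  rw [← integral_mul_rpow_sub_one m (by linarith), ← integral_mul_rpow_sub_one M (by linarith)]
  exact ⟨intervalIntegral.integral_mono_on hr.1 (hpow m) hS fun t ht => (hbr t ht).1,
    intervalIntegral.integral_mono_on hr.1 hS (hpow M) fun t ht => (hbr t ht).2⟩

lemma integral_SKN_pos (K : ℝ) {N r : ℝ} (hN : 1 < N) (hr : 0 < r) :
    0 < ∫ t in (0:ℝ)..r, SKN K N t := by
  obtain ⟨m, _, hm, _, hb⟩ := exists_integral_SKN_bounds K hN hr
  have : 0 < m * (r ^ N / N) := by have := hr; positivity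
  exact this.trans_le (hb r ⟨hr.le, le_rfl⟩).1

lemma exists_mul_rpow_mul_integral_SKN_le (K : ℝ) {N T : ℝ} (hN : 1 < N) (hT : 0 < T) :
    ∃ c > 0, ∀ r R, 0 < r → r ≤ R → R ≤ T →
      c * (r / R) ^ N * ∫ t in (0:ℝ)..R, SKN K N t ≤ ∫ t in (0:ℝ)..r, SKN K N t := by
  obtain ⟨m, M, hm, hM, hb⟩ := exists_integral_SKN_bounds K hN hT
  refine ⟨m / M, by positivity, fun r R hr hrR hRT => ?_⟩
  have hR : 0 < R := hr.trans_le hrR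
  calc m / M * (r / R) ^ N * ∫ t in (0:ℝ)..R, SKN K N t
      ≤ m / M * (r / R) ^ N * (M * (R ^ N / N)) := by
        gcongr; exact (hb R ⟨hR.le, hRT⟩).2
    _ = m * (r ^ N / N) := by
        rw [Real.div_rpow hr.le hR.le]
        field_simp [(Real.rpow_pos_of_pos hR N).ne']
    _ ≤ ∫ t in (0:ℝ)..r, SKN K N t := (hb r ⟨hr.le, hrR.trans hRT⟩).1

section BishopGromov

variable {X : Type*} [MetricSpace X] [MeasurableSpace X] {ν : Measure X} {K N : ℝ}

lemma BishopGromov.measure_ball_mul_le (hν : BishopGromov ν K N) (hN : 1 < N) (x : X)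
    {r R : ℝ} (hr : 0 < r) (hrR : r ≤ R) :
    (ν (ball x R)).toReal * ∫ t in (0:ℝ)..r, SKN K N t ≤
      (ν (ball x r)).toReal * ∫ t in (0:ℝ)..R, SKN K N t :=
  (div_le_div_iff₀ (integral_SKN_pos K hN (hr.trans_le hrR)) (integral_SKN_pos K hN hr)).1
    (hν x hr (hr.trans_le hrR) hrR)

/-- The disjoint balls `ball (p k) r` lie in `ball x (ρ + r)`, and by Bishop–Gromov each carries
at least the fraction `v r / v (2ρ + r)` of the mass of `ball (p k) (2ρ + r) ⊇ ball x (ρ + r)`,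
where `v R = ∫₀^R S_K^N`. -/
lemma BishopGromov.card_mul_integral_le [OpensMeasurableSpace X] [IsFiniteMeasure ν]
    {ι : Type*} [Fintype ι] (hν : BishopGromov ν K N) (hN : 1 < N) {p : ι → X} {x : X}
    {ρ r : ℝ} (hρ : 0 ≤ ρ) (hr : 0 < r) (hx : 0 < ν (ball x (ρ + r)))
    (hdisj : Pairwise fun k l => Disjoint (ball (p k) r) (ball (p l) r))
    (hnear : ∀ k, dist (p k) x < ρ) :
    Fintype.card ι * ∫ t in (0:ℝ)..r, SKN K N t ≤ ∫ t in (0:ℝ)..(2 * ρ + r), SKN K N t := by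
  set V := (ν (ball x (ρ + r))).toReal
  have hV : 0 < V := ENNReal.toReal_pos hx.ne' (measure_ne_top ν _)
  have hball (k : ι) : V * ∫ t in (0:ℝ)..r, SKN K N t ≤
      (ν (ball (p k) r)).toReal * ∫ t in (0:ℝ)..(2 * ρ + r), SKN K N t := by
    have hsub : ball x (ρ + r) ⊆ ball (p k) (2 * ρ + r) :=
      ball_subset_ball' (by linarith [dist_comm x (p k), hnear k])
    calc V * ∫ t in (0:ℝ)..r, SKN K N t
        ≤ (ν (ball (p k) (2 * ρ + r))).toReal * ∫ t in (0:ℝ)..r, SKN K N t := by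
          refine mul_le_mul_of_nonneg_right ?_ (integral_SKN_pos K hN hr).le
          exact ENNReal.toReal_mono (measure_ne_top ν _) (measure_mono hsub)
      _ ≤ _ := hν.measure_ball_mul_le hN (p k) hr (by linarith)
  have hsum : ∑ k, (ν (ball (p k) r)).toReal ≤ V := by
    rw [← ENNReal.toReal_sum fun _ _ => measure_ne_top ν _,
      ← measure_biUnion_finset (fun k _ l _ hkl => hdisj hkl) fun _ _ => measurableSet_ball]
    refine ENNReal.toReal_mono (measure_ne_top ν _) (measure_mono ?_)
    exact iUnion₂_subset fun k _ => ball_subset_ball' (by linarith [hnear k])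
  have htotal := Finset.sum_le_sum fun k (_ : k ∈ Finset.univ) => hball k
  rw [Finset.sum_const, Finset.card_univ, nsmul_eq_mul, ← Finset.sum_mul] at htotal
  have hR := (integral_SKN_pos K hN (r := 2 * ρ + r) (by linarith)).le
  nlinarith [mul_le_mul_of_nonneg_right hsum hR]

end BishopGromov

lemma IsGeodesicSpace.exists_isPreconnected {X : Type*} [MetricSpace X] (hX : IsGeodesicSpace X)
    (x y : X) : ∃ s : Set X, IsPreconnected s ∧ x ∈ s ∧ y ∈ s ∧ s ⊆ closedBall x (dist x y) := by
  obtain ⟨f, hf0, hfd, hf⟩ := hX x y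
  have hd : dist x y ∈ Icc 0 (dist x y) := ⟨dist_nonneg, le_rfl⟩
  have hcont : ContinuousOn f (Icc 0 (dist x y)) :=
    (LipschitzOnWith.mk_one fun s hs t ht => (hf s hs t ht).le.trans_eq (Real.dist_eq s t).symm)
      |>.continuousOn
  refine ⟨f '' Icc 0 (dist x y), isPreconnected_Icc.image f hcont,
    ⟨0, left_mem_Icc.2 hd.1, hf0⟩, ⟨_, hd, hfd⟩, ?_⟩
  rintro _ ⟨t, ht, rfl⟩
  calc dist (f t) x = |t - 0| := hf0 ▸ hf t ht 0 (left_mem_Icc.2 hd.1)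
    _ ≤ dist x y := by rw [sub_zero, abs_of_nonneg ht.1]; exact ht.2

def coverGraph {X ι : Type*} (s : Set X) (U : ι → Set X) :
    SimpleGraph {k // (s ∩ U k).Nonempty} :=
  SimpleGraph.fromRel fun k l => (U k ∩ U l).Nonempty

lemma IsPreconnected.coverGraph_preconnected {X ι : Type*} [TopologicalSpace X] [Finite ι]
    {s : Set X} (hs : IsPreconnected s) {U : ι → Set X} (hU : ∀ k, IsOpen (U k))
    (hcov : s ⊆ ⋃ k, U k) : (coverGraph s U).Preconnected := by
  have hreach {k l : {k // (s ∩ U k).Nonempty}} {z : X} (hk : z ∈ U k) (hl : z ∈ U l) :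
      (coverGraph s U).Reachable k l := by
    by_cases hkl : k = l
    · exact hkl ▸ SimpleGraph.Reachable.refl k
    · exact SimpleGraph.Adj.reachable ((SimpleGraph.fromRel_adj _ _ _).2 ⟨hkl, .inl ⟨z, hk, hl⟩⟩)
  let P : X → X → Prop := fun x y => ∀ k l : {k // (s ∩ U k).Nonempty}, x ∈ U k → y ∈ U l →
    (coverGraph s U).Reachable k l
  have hP : ∀ x ∈ s, ∀ y ∈ s, P x y := by
    intro x hx y hy
    refine hs.induction₂' P (fun x _ => ?_) (fun x y z _ hy _ hxy hyz k l hk hl => ?_) hx hy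
    · have hnear : ∀ᶠ y in 𝓝[s] x, ∀ k, x ∈ U k → y ∈ U k :=
        Filter.eventually_all.2 fun k => Filter.eventually_imp_distrib_left.2 fun hk =>
          mem_nhdsWithin_of_mem_nhds ((hU k).mem_nhds hk)
      filter_upwards [hnear] with y hy
      exact ⟨fun k l hk hl => hreach (hy k hk) hl, fun k l hk hl => hreach hk (hy l hl)⟩
    · obtain ⟨m, hm⟩ := mem_iUnion.1 (hcov hy)
      exact (hxy k ⟨m, y, hy, hm⟩ hk hm).trans (hyz ⟨m, y, hy, hm⟩ l hm hl)
  rintro ⟨k, x, hxs, hxk⟩ ⟨l, y, hys, hyl⟩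
  exact hP x hxs y hys _ _ hxk hyl

lemma dist_le_mul_walk_length {V X : Type*} [PseudoMetricSpace X]
    {G : SimpleGraph V} {f : V → X} {c : ℝ} (hf : ∀ u v, G.Adj u v → dist (f u) (f v) ≤ c) :
    ∀ {u v : V} (w : G.Walk u v), dist (f u) (f v) ≤ c * w.length
  | _, _, .nil => by simp
  | _, _, .cons h w => by
    rw [SimpleGraph.Walk.length_cons, Nat.cast_succ, mul_add_one, add_comm]
    exact (dist_triangle _ _ _).trans (add_le_add (hf _ _ h) (dist_le_mul_walk_length hf w))

lemma exists_card_mul_le_one (K : ℝ) {N D C : ℝ} (hN : 1 < N) (hD : 0 < D) (hC : 0 < C) :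
    ∃ c₀ : ℝ, 0 < c₀ ∧ ∀ {X ι : Type*} [MetricSpace X] [MeasurableSpace X] [OpensMeasurableSpace X]
      [Fintype ι] (ν : Measure X) [IsFiniteMeasure ν], BishopGromov ν K N →
      (∀ x : X, ∀ r > 0, 0 < ν (ball x r)) → ∀ ε, 0 < ε → ε ≤ D → ∀ (p : ι → X) (x : X),
      (Pairwise fun k l => Disjoint (ball (p k) (ε / 2)) (ball (p l) (ε / 2))) →
      (∀ k, dist (p k) x < C * ε) → Fintype.card ι * c₀ ≤ 1 := by
  obtain ⟨c, hc, hratio⟩ :=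
    exists_mul_rpow_mul_integral_SKN_le K hN (T := (2 * C + 1 / 2) * D) (by positivity)
  refine ⟨c * (1 / (4 * C + 1)) ^ N, by positivity, ?_⟩
  intro X ι _ _ _ _ ν _ hν hfull ε hε hεD p x hdisj hnear
  have hpack := hν.card_mul_integral_le hN (by positivity) (half_pos hε)
    (hfull x _ (by positivity)) hdisj hnear
  rw [show 2 * (C * ε) + ε / 2 = (2 * C + 1 / 2) * ε by ring] at hpack
  have hcomp := hratio (ε / 2) ((2 * C + 1 / 2) * ε) (half_pos hε) (by nlinarith) (by gcongr)
  rw [show ε / 2 / ((2 * C + 1 / 2) * ε) = 1 / (4 * C + 1) by field_simp; ring] at hcomp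
  have hv := integral_SKN_pos K hN (r := (2 * C + 1 / 2) * ε) (by positivity)
  refine le_of_mul_le_mul_right ?_ hv
  calc Fintype.card ι * (c * (1 / (4 * C + 1)) ^ N) * ∫ t in (0:ℝ)..(2 * C + 1 / 2) * ε, SKN K N t
      ≤ Fintype.card ι * ∫ t in (0:ℝ)..ε / 2, SKN K N t := by
        rw [mul_assoc]; gcongr
    _ ≤ 1 * ∫ t in (0:ℝ)..(2 * C + 1 / 2) * ε, SKN K N t := by rw [one_mul]; exact hpack

theorem stmt_2_general (K N D C : ℝ) (hN : 1 < N) (hD : 0 < D) (hC : 0 < C) :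
    ∃ n₃ : ℝ, 0 < n₃ ∧
      ∀ (X₁ : Type u) (_ : MetricSpace X₁) (mX₁ : MeasurableSpace X₁) (_ : BorelSpace X₁)
        (X₂ : Type v) (_ : MetricSpace X₂) (mX₂ : MeasurableSpace X₂) (_ : BorelSpace X₂)
        (ν₁ : Measure X₁) (ν₂ : Measure X₂),
        IsGeodesicSpace X₁ → IsGeodesicSpace X₂ →
        (∀ x y : X₁, dist x y ≤ D) → (∀ x y : X₂, dist x y ≤ D) →
        (∀ x : X₁, ∀ r > (0:ℝ), 0 < ν₁ (ball x r)) →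
        (∀ x : X₂, ∀ r > (0:ℝ), 0 < ν₂ (ball x r)) →
        0 < ν₁ Set.univ → ν₁ Set.univ < ⊤ →
        0 < ν₂ Set.univ → ν₂ Set.univ < ⊤ →
        BishopGromov ν₁ K N → BishopGromov ν₂ K N →
        ∀ ε : ℝ, 0 < ε → ε ≤ D →
        ∀ (n₀ : ℕ) (p : Fin n₀ → X₁) (q : Fin n₀ → X₂),
        Function.Injective p → Function.Injective q →
        (∀ x : X₁, ∃ k, x ∈ ball (p k) ε) →
        (∀ x : X₂, ∃ k, x ∈ ball (q k) ε) →
        (Pairwise fun i j => Disjoint (ball (p i) (ε / 2)) (ball (p j) (ε / 2))) →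
        (Pairwise fun i j => Disjoint (ball (q i) (ε / 2)) (ball (q j) (ε / 2))) →
        (∀ i j, (ball (p i) ε ∩ ball (p j) ε).Nonempty ↔
          (ball (q i) ε ∩ ball (q j) ε).Nonempty) →
        ∀ i j, dist (p i) (p j) < C * ε → dist (q i) (q j) < n₃ * ε := by
  classical
  obtain ⟨c₀, hc₀, hcard⟩ := exists_card_mul_le_one K hN hD (C := C + 1) (by linarith)
  refine ⟨2 / c₀, by positivity, ?_⟩
  intro X₁ _ _ _ X₂ _ _ _ ν₁ ν₂ hgeo₁ _ _ _ hfull₁ _ _ hfin₁ _ _ hBG₁ _ ε hε hεD n₀ p q _ _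
    hcov₁ _ hdisj₁ _ hpattern i j hij
  have : IsFiniteMeasure ν₁ := ⟨hfin₁⟩
  obtain ⟨s, hs, his, hjs, hsub⟩ := hgeo₁.exists_isPreconnected (p i) (p j)
  set U := fun k => ball (p k) ε
  have hnear (k : {k // (s ∩ U k).Nonempty}) : dist (p k) (p i) < (C + 1) * ε := by
    obtain ⟨z, hzs, hzk⟩ := k.2
    linarith [dist_triangle_left (p k) (p i) z, mem_ball.1 hzk, mem_closedBall.1 (hsub hzs)]
  have hcard := hcard ν₁ hBG₁ hfull₁ ε hε hεD (fun k : {k // (s ∩ U k).Nonempty} => p k) (p i)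
    (fun k l hkl => hdisj₁ (Subtype.val_injective.ne hkl)) hnear
  have hstep (k l) (hkl : (coverGraph s U).Adj k l) : dist (q k) (q l) ≤ 2 * ε := by
    obtain ⟨z, hzk, hzl⟩ := (hpattern k l).1 (by
      rcases ((SimpleGraph.fromRel_adj _ _ _).1 hkl).2 with h | h
      exacts [h, Set.inter_comm _ _ ▸ h])
    linarith [dist_triangle_left (q k) (q l) z, mem_ball.1 hzk, mem_ball.1 hzl]
  obtain ⟨w, hw⟩ := (hs.coverGraph_preconnected (fun _ => isOpen_ball)
    fun z _ => mem_iUnion.2 (hcov₁ z)).exists_isPath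
    ⟨i, p i, his, mem_ball_self hε⟩ ⟨j, p j, hjs, mem_ball_self hε⟩
  calc dist (q i) (q j) ≤ 2 * ε * w.length := dist_le_mul_walk_length (f := fun k : {k // (s ∩ U k).Nonempty} => q k) hstep w
    _ < 2 * ε * Fintype.card {k // (s ∩ U k).Nonempty} := by
        gcongr; exact_mod_cast hw.length_lt
    _ ≤ 2 / c₀ * ε := by
        rw [div_mul_eq_mul_div, le_div_iff₀ hc₀]; nlinarith

theorem stmt_2 (K N D C : ℝ) (hK : K ≤ 0) (hN : 1 < N) (hD : 0 < D) (hC : 0 < C) :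
    ∃ n₃ : ℝ, 0 < n₃ ∧
      ∀ (X₁ : Type u) (_ : MetricSpace X₁) (mX₁ : MeasurableSpace X₁) (_ : BorelSpace X₁)
        (X₂ : Type v) (_ : MetricSpace X₂) (mX₂ : MeasurableSpace X₂) (_ : BorelSpace X₂)
        (ν₁ : Measure X₁) (ν₂ : Measure X₂),
        IsGeodesicSpace X₁ → IsGeodesicSpace X₂ →
        (∀ x y : X₁, dist x y ≤ D) → (∀ x y : X₂, dist x y ≤ D) →
        (∀ x : X₁, ∀ r > (0:ℝ), 0 < ν₁ (ball x r)) →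
        (∀ x : X₂, ∀ r > (0:ℝ), 0 < ν₂ (ball x r)) →
        0 < ν₁ Set.univ → ν₁ Set.univ < ⊤ →
        0 < ν₂ Set.univ → ν₂ Set.univ < ⊤ →
        BishopGromov ν₁ K N → BishopGromov ν₂ K N →
        ∀ ε : ℝ, 0 < ε → ε ≤ D →
        ∀ (n₀ : ℕ) (p : Fin n₀ → X₁) (q : Fin n₀ → X₂),
        Function.Injective p → Function.Injective q →
        (∀ x : X₁, ∃ k, x ∈ ball (p k) ε) →
        (∀ x : X₂, ∃ k, x ∈ ball (q k) ε) →
        (Pairwise fun i j => Disjoint (ball (p i) (ε / 2)) (ball (p j) (ε / 2))) →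
        (Pairwise fun i j => Disjoint (ball (q i) (ε / 2)) (ball (q j) (ε / 2))) →
        (∀ i j, (ball (p i) ε ∩ ball (p j) ε).Nonempty ↔
          (ball (q i) ε ∩ ball (q j) ε).Nonempty) →
        ∀ i j, dist (p i) (p j) < C * ε → dist (q i) (q j) < n₃ * ε :=
  stmt_2_general K N D C hN hD hC
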